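/- Let A be a unital C*-algebra and x ∈ A. Then x is selfadjoint with ‖x‖ ≤ 1 if and only if for every t ∈ ℝ one has ‖x − i·t·1‖ ≤ √(1 + t²). (The operator-norm characterization of selfadjoint contractions used in the proofs of Lemmas 1 and 2.) -/
import Mathlib

private lemma key_identity {A : Type*} [CStarAlgebra A] (x : A) (t : ℝ) :
    star (x - (Complex.I * (t : ℂ)) • (1 : A)) * (x - (Complex.I * (t : ℂ)) • (1 : A)) =
      star x * x + ((t : ℂ)^2) • (1 : A) + (Complex.I * (t : ℂ)) • (x - star x) := by
  simp only [star_sub, star_smul, star_one, RCLike.star_def, map_mul, Complex.conj_I,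
    Complex.conj_ofReal, sub_mul, mul_sub, smul_mul_assoc, mul_smul_comm, one_mul, mul_one,
    smul_smul, smul_sub]
  match_scalars <;> ring_nf <;> simp [Complex.I_sq]

/-- **Operator-norm characterization of selfadjoint contractions** (Lemma A.4.2 of
Effros–Ruan, used in the proofs of Lemmas 1 and 2).  In a unital C*-algebra `A`, an element
`x` is selfadjoint with `‖x‖ ≤ 1` if and only if `‖x − i t 1‖ ≤ √(1 + t²)` for every real
`t`. -/
theorem isSelfAdjoint_and_norm_le_one_iff
    {A : Type*} [CStarAlgebra A] (x : A) :
    (IsSelfAdjoint x ∧ ‖x‖ ≤ 1) ↔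
    (∀ t : ℝ, ‖x - (Complex.I * (t : ℂ)) • (1 : A)‖ ≤ Real.sqrt (1 + t ^ 2)) := by
  obtain hA | hA := subsingleton_or_nontrivial A
  · refine ⟨fun _ t => ?_, fun _ => ⟨?_, ?_⟩⟩
    · rw [Subsingleton.elim (x - (Complex.I * (t : ℂ)) • (1 : A)) 0, norm_zero]
      positivity
    · exact (Subsingleton.elim _ _ : star x = x)
    · rw [Subsingleton.elim x 0, norm_zero]; norm_num
  constructor
  · rintro ⟨hsa, hnorm⟩ t
    have hpos : (0:ℝ) ≤ 1 + t ^ 2 := by positivity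
    rw [Real.le_sqrt (norm_nonneg _) hpos]
    have key := key_identity x t
    rw [show x - star x = 0 by rw [hsa.star_eq, sub_self], smul_zero, add_zero] at key
    calc ‖x - (Complex.I * (t : ℂ)) • (1 : A)‖ ^ 2
        = ‖star (x - (Complex.I * (t : ℂ)) • (1 : A)) *
            (x - (Complex.I * (t : ℂ)) • (1 : A))‖ := by
          rw [CStarRing.norm_star_mul_self]; ring
      _ = ‖star x * x + ((t : ℂ)^2) • (1 : A)‖ := by rw [key]
      _ ≤ ‖star x * x‖ + ‖((t : ℂ)^2) • (1 : A)‖ := norm_add_le _ _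
      _ ≤ 1 + t ^ 2 := by
          rw [CStarRing.norm_star_mul_self, norm_smul, norm_one, mul_one]
          have : ‖((t : ℂ)^2)‖ = t ^ 2 := by
            rw [← Complex.ofReal_pow, Complex.norm_real]
            exact abs_of_nonneg (by positivity)
          rw [this]
          have : ‖x‖ * ‖x‖ ≤ 1 := mul_le_one₀ hnorm (norm_nonneg x) hnorm
          linarith [sq_nonneg t]
  · intro h
    letI := CStarAlgebra.spectralOrder A
    letI := CStarAlgebra.spectralOrderedRing A
    have hx1 : ‖x‖ ≤ 1 := by
      have := h 0
      simpa using this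
    set b : A := (-(Complex.I)/2) • (x - star x) with hb_def
    have hb : IsSelfAdjoint b := by
      rw [IsSelfAdjoint, hb_def, star_smul, star_sub, star_star, RCLike.star_def, map_div₀,
        map_neg, Complex.conj_I, map_ofNat]
      match_scalars <;> ring
    -- for every s : ℝ, s • b ≤ 1
    have hs : ∀ s : ℝ, (s : ℝ) • b ≤ 1 := by
      intro s
      set t := -s / 2 with ht
      set y := x - (Complex.I * (t : ℂ)) • (1 : A) with hy
      have hynorm : ‖star y * y‖ ≤ 1 + t ^ 2 := by
        rw [CStarRing.norm_star_mul_self]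
        calc ‖y‖ * ‖y‖ ≤ Real.sqrt (1 + t ^ 2) * Real.sqrt (1 + t ^ 2) :=
              mul_le_mul (h t) (h t) (norm_nonneg _) (Real.sqrt_nonneg _)
          _ = 1 + t ^ 2 := Real.mul_self_sqrt (by positivity)
      have hub : star y * y ≤ algebraMap ℝ A (1 + t ^ 2) :=
        le_algebraMap_of_spectrum_le (fun r hr =>
          (Real.le_norm_self r).trans ((spectrum.norm_le_norm_of_mem hr).trans hynorm))
          (IsSelfAdjoint.star_mul_self y)
      have key : star y * y = star x * x + ((t : ℂ)^2) • (1 : A) + (s : ℝ) • b := by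
        rw [hy, key_identity x t, hb_def, ← Complex.coe_smul, smul_smul]
        congr 2
        push_cast [ht]
        ring
      rw [key] at hub
      have h0 : (0:A) ≤ star x * x := star_mul_self_nonneg x
      calc (s : ℝ) • b ≤ star x * x + (s : ℝ) • b := le_add_of_nonneg_left h0
        _ = (star x * x + ((t : ℂ)^2) • (1 : A) + (s : ℝ) • b) - ((t : ℂ)^2) • (1 : A) := by
            abel
        _ ≤ algebraMap ℝ A (1 + t ^ 2) - ((t : ℂ)^2) • (1 : A) := sub_le_sub_right hub _
        _ = 1 := by
            rw [Algebra.algebraMap_eq_smul_one, ← Complex.coe_smul]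
            push_cast
            module
    -- hence the spectrum of b is {0}
    have hspec : ∀ r ∈ spectrum ℝ b, r = 0 := by
      intro r hr
      by_contra hr0
      have h2 : (2 / r) * r ≤ 1 := by
        have := hs (2 / r)
        rw [← cfc_id' ℝ b hb, ← cfc_const_mul (2 / r) _ b] at this
        exact (cfc_le_one_iff _ b).mp this r hr
      rw [div_mul_cancel₀ _ hr0] at h2
      norm_num at h2
    have hbz : b = 0 := by
      have := CStarAlgebra.norm_or_neg_norm_mem_spectrum hb
      rcases this with h' | h'
      · exact norm_eq_zero.mp (hspec _ h')
      · exact norm_eq_zero.mp (by simpa using neg_eq_zero.mpr (hspec _ h') : ‖b‖ = 0)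
    have hxs : x - star x = 0 := by
      rcases smul_eq_zero.mp (hb_def ▸ hbz) with h' | h'
      · exact absurd h' (by norm_num [div_eq_zero_iff, Complex.I_ne_zero])
      · exact h'
    exact ⟨by rw [IsSelfAdjoint, ← sub_eq_zero]; simpa using neg_eq_zero.mpr hxs, hx1⟩
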